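/- arXiv:1603.00109 — 2 statements merged into one kernel-verified Lean document; each statement's English description precedes it below -/
import Mathlib

section
/- The algebra homomorphism R = K⟨x,y⟩/(xy−1) → End_K(V) sending x to the left shift and y to the right shift on V = K^{(ℕ)} is injective. -/
noncomputable section

/-- The defining relation of the Toeplitz/Jacobson algebra: `x * y = 1`. -/
inductive ToeplitzRel (K : Type*) [Field K] :
    FreeAlgebra K (Fin 2) → FreeAlgebra K (Fin 2) → Prop
  | rel : ToeplitzRel K (FreeAlgebra.ι K 0 * FreeAlgebra.ι K 1) 1

/-- The Toeplitz/Jacobson algebra `R = K⟨x,y⟩/(xy-1)`. -/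
abbrev Toeplitz (K : Type*) [Field K] := RingQuot (ToeplitzRel K)

variable (K : Type*) [Field K]

/-- The image of the generator `x` in `R`. -/
def tx : Toeplitz K := RingQuot.mkAlgHom K (ToeplitzRel K) (FreeAlgebra.ι K 0)

/-- The image of the generator `y` in `R`. -/
def ty : Toeplitz K := RingQuot.mkAlgHom K (ToeplitzRel K) (FreeAlgebra.ι K 1)

/-- `f n = y^(n-1) x^(n-1) - y^n x^n`. -/
def tf (n : ℕ) : Toeplitz K := ty K ^ (n-1) * tx K ^ (n-1) - ty K ^ n * tx K ^ n

/-- The left shift on `V = K^(ℕ)`: `e_0 ↦ 0`, `e_{i+1} ↦ e_i`. -/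
def leftShift : (ℕ →₀ K) →ₗ[K] (ℕ →₀ K) :=
  Finsupp.lsum K fun i => match i with
    | 0 => 0
    | Nat.succ j => Finsupp.lsingle j

/-- The right shift on `V = K^(ℕ)`: `e_i ↦ e_{i+1}`. -/
def rightShift : (ℕ →₀ K) →ₗ[K] (ℕ →₀ K) :=
  Finsupp.lmapDomain K K Nat.succ

/-!
Since `x y = 1`, every word in `x, y` reduces to a monomial `y^i x^j`, so these monomials span `R`.
Their images `rightShift^i * leftShift^j` are linearly independent, because the linear map
`T ↦ T - y T x` sends `y^i x^j` to the matrix unit `E_{ij}`.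
-/

section Bicyclic

variable {M : Type*} [Monoid M] {a b : M}

theorem pow_mul_pow_of_mul_eq_one_of_le (h : a * b = 1) {j k : ℕ} (hjk : j ≤ k) :
    a ^ j * b ^ k = b ^ (k - j) := by
  conv_lhs =>
    rw [← Nat.add_sub_cancel' hjk, pow_add, ← mul_assoc, pow_mul_pow_eq_one j h, one_mul]

theorem pow_mul_pow_of_mul_eq_one_of_ge (h : a * b = 1) {j k : ℕ} (hkj : k ≤ j) :
    a ^ j * b ^ k = a ^ (j - k) := by
  conv_lhs => rw [← Nat.sub_add_cancel hkj, pow_add, mul_assoc, pow_mul_pow_eq_one k h, mul_one]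

def bicyclicSubmonoid (h : a * b = 1) : Submonoid M where
  carrier := Set.range fun p : ℕ × ℕ => b ^ p.1 * a ^ p.2
  one_mem' := ⟨(0, 0), by simp⟩
  mul_mem' := by
    rintro _ _ ⟨⟨i, j⟩, rfl⟩ ⟨⟨k, l⟩, rfl⟩
    rcases le_total j k with hjk | hkj
    · refine ⟨(i + (k - j), l), ?_⟩
      dsimp only
      rw [mul_assoc, ← mul_assoc (a ^ j), pow_mul_pow_of_mul_eq_one_of_le h hjk, ← mul_assoc,
        ← pow_add]
    · refine ⟨(i, j - k + l), ?_⟩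
      dsimp only
      rw [mul_assoc, ← mul_assoc (a ^ j), pow_mul_pow_of_mul_eq_one_of_ge h hkj, pow_add]

end Bicyclic

/-- Semiring version of `LinearMap.injective_of_linearIndependent`, which cannot be applied to
`Toeplitz K`: on a `RingQuot` the `AddCommMonoid` instances coming from `Ring` and from `Semiring`
do not unify. -/
theorem injective_of_span_eq_top_of_linearIndependent_comp {R M N ι : Type*} [Semiring R]
    [AddCommMonoid M] [AddCommMonoid N] [Module R M] [Module R N] {f : M →ₗ[R] N} {v : ι → M}
    (hv : Submodule.span R (Set.range v) = ⊤) (hli : LinearIndependent R (f ∘ v)) :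
    Function.Injective f := by
  have hsurj : Function.Surjective (Finsupp.linearCombination R v) := by
    rw [← LinearMap.range_eq_top, Finsupp.range_linearCombination, hv]
  refine Function.Injective.of_comp_right ?_ hsurj
  rw [← LinearMap.coe_comp, ← Finsupp.linearCombination_linear_comp]
  exact hli

theorem span_pow_mul_pow_eq_top_of_adjoin_eq_top {R A : Type*} [CommSemiring R] [Semiring A]
    [Algebra R A] {a b : A} (h : a * b = 1) (hab : Algebra.adjoin R {a, b} = ⊤) :
    Submodule.span R (Set.range fun p : ℕ × ℕ => b ^ p.1 * a ^ p.2) = ⊤ := by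
  have hgen : Submonoid.closure {a, b} ≤ bicyclicSubmonoid h := by
    rw [Submonoid.closure_le]
    rintro _ (rfl | rfl)
    exacts [⟨(0, 1), by simp⟩, ⟨(1, 0), by simp⟩]
  refine eq_top_iff.mpr ?_
  calc (⊤ : Submodule R A) = Subalgebra.toSubmodule (Algebra.adjoin R {a, b}) := by
        rw [hab]; rfl
    _ = Submodule.span R (Submonoid.closure {a, b}) := Algebra.adjoin_eq_span ..
    _ ≤ _ := Submodule.span_mono hgen

namespace Toeplitz

variable {K}

theorem tx_mul_ty : tx K * ty K = 1 := by
  simpa only [tx, ty, map_mul, map_one] using RingQuot.mkAlgHom_rel K (ToeplitzRel.rel (K := K))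

theorem adjoin_tx_ty : Algebra.adjoin K {tx K, ty K} = ⊤ := by
  have hgen : ({tx K, ty K} : Set (Toeplitz K)) =
      RingQuot.mkAlgHom K (ToeplitzRel K) '' Set.range (FreeAlgebra.ι K) := by
    ext
    simp [Fin.exists_fin_two, tx, ty, eq_comm]
  rw [hgen, Algebra.adjoin_image, FreeAlgebra.adjoin_range_ι, Algebra.map_top,
    AlgHom.range_eq_top]
  exact RingQuot.mkAlgHom_surjective K (ToeplitzRel K)

end Toeplitz

section Shifts

variable {K}

open Finsupp

theorem leftShift_single_zero (c : K) : leftShift K (single 0 c) = 0 := by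
  simp [leftShift]

theorem leftShift_single_succ (m : ℕ) (c : K) :
    leftShift K (single (m + 1) c) = single m c := by
  simp [leftShift]

theorem rightShift_single (m : ℕ) (c : K) : rightShift K (single m c) = single (m + 1) c := by
  simp [rightShift]

theorem leftShift_pow_single (j m : ℕ) (c : K) :
    (leftShift K ^ j) (single m c) = if j ≤ m then single (m - j) c else 0 := by
  induction j generalizing m with
  | zero => simp
  | succ j ih =>
    rw [pow_succ, Module.End.mul_apply]
    cases m with
    | zero => simp [leftShift_single_zero]
    | succ m => simp [leftShift_single_succ, ih]

theorem rightShift_pow_single (i m : ℕ) (c : K) :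
    (rightShift K ^ i) (single m c) = single (m + i) c := by
  induction i generalizing m with
  | zero => simp
  | succ i ih =>
    rw [pow_succ, Module.End.mul_apply, rightShift_single, ih, add_right_comm, add_assoc]

theorem rightShift_pow_mul_leftShift_pow_single (i j m : ℕ) (c : K) :
    (rightShift K ^ i * leftShift K ^ j) (single m c) =
      if j ≤ m then single (m - j + i) c else 0 := by
  rw [Module.End.mul_apply, leftShift_pow_single]
  split_ifs <;> simp [rightShift_pow_single]

/-- `shiftCoeff T (n, m)` is the `(n, m)` matrix entry of `T - y T x`. Since
`y^i x^j - y^(i+1) x^(j+1) = y^i (1 - y x) x^j` is the matrix unit `E_{ij}`, it reads off the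
coefficient of `y^i x^j` in a combination of such monomials. -/
def shiftCoeff : Module.End K (ℕ →₀ K) →ₗ[K] (ℕ × ℕ → K) where
  toFun T p := ((T - rightShift K * T * leftShift K) (single p.2 1)) p.1
  map_add' S T := by
    ext
    simp only [mul_add, add_mul, LinearMap.sub_apply, LinearMap.add_apply, Module.End.mul_apply,
      coe_sub, coe_add, Pi.sub_apply, Pi.add_apply]
    abel
  map_smul' c T := by ext; simp [mul_sub]

theorem shiftCoeff_rightShift_pow_mul_leftShift_pow (p : ℕ × ℕ) :
    shiftCoeff (rightShift K ^ p.1 * leftShift K ^ p.2) = Pi.single p 1 := by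
  obtain ⟨i, j⟩ := p
  ext ⟨n, m⟩
  have hshift : rightShift K * (rightShift K ^ i * leftShift K ^ j) * leftShift K =
      rightShift K ^ (i + 1) * leftShift K ^ (j + 1) := by
    rw [pow_succ', pow_succ, mul_assoc, mul_assoc, mul_assoc]
  simp only [shiftCoeff, LinearMap.coe_mk, AddHom.coe_mk, hshift, LinearMap.sub_apply,
    rightShift_pow_mul_leftShift_pow_single]
  rcases lt_trichotomy j m with hjm | rfl | hmj
  · rw [if_pos hjm.le, if_pos (show j + 1 ≤ m by omega),
      show m - (j + 1) + (i + 1) = m - j + i by omega, sub_self]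
    simp [hjm.ne']
  · simp [Pi.single_apply, Finsupp.single_apply, eq_comm]
  · rw [if_neg (by omega), if_neg (by omega)]
    simp [hmj.ne]

theorem linearIndependent_rightShift_pow_mul_leftShift_pow :
    LinearIndependent K fun p : ℕ × ℕ => rightShift K ^ p.1 * leftShift K ^ p.2 := by
  refine LinearIndependent.of_comp shiftCoeff ?_
  convert Pi.linearIndependent_single_one (ℕ × ℕ) K with p
  exact shiftCoeff_rightShift_pow_mul_leftShift_pow p

end Shifts

/-- The algebra homomorphism `R = K⟨x,y⟩/(xy-1) → End_K(V)` sending `x` to the left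
shift and `y` to the right shift on `V = K^(ℕ)` is injective. -/
theorem toeplitz_shift_representation_injective
    (φ : Toeplitz K →ₐ[K] Module.End K (ℕ →₀ K))
    (hx : φ (tx K) = leftShift K) (hy : φ (ty K) = rightShift K) :
    Function.Injective φ := by
  refine injective_of_span_eq_top_of_linearIndependent_comp (f := φ.toLinearMap)
    (span_pow_mul_pow_eq_top_of_adjoin_eq_top Toeplitz.tx_mul_ty Toeplitz.adjoin_tx_ty) ?_
  have hmonomials : φ.toLinearMap ∘ (fun p : ℕ × ℕ => ty K ^ p.1 * tx K ^ p.2) =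
      fun p => rightShift K ^ p.1 * leftShift K ^ p.2 := by
    funext p
    simp [hx, hy]
  rw [hmonomials]
  exact linearIndependent_rightShift_pow_mul_leftShift_pow
end
end

section
/- Let R = K⟨x,y⟩/(xy−1) and S₁ = Rf₁ the left ideal generated by f₁ = 1 − yx. Then S₁ is a simple left R-module. -/
noncomputable section

variable (K : Type*) [Field K]

/-!
With `x * y = 1`, the element `e = 1 - y * x` is an idempotent with `x * e = 0 = e * y`, and
`x ^ k * y ^ m = y ^ (m - k) * x ^ (k - m)`. Hence `e * x ^ k * y ^ m * e` is `e` if `k = m` and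
`0` otherwise. Since `x` and `y` generate the algebra, every element of `R e` is a `K`-linear
combination of the `y ^ m * e`, and left multiplication by `e * x ^ k` extracts the `k`-th
coefficient times `e`. So every nonzero element of `R e` generates `e`, and `R e` is simple as soon
as `e ≠ 0`. In `K⟨x,y⟩/(xy-1)` the shift operators on `ℕ → K` show `y * x ≠ 1`.
-/

theorem isSimpleModule_span_singleton_of_mem_span {R M : Type*} [Ring R] [AddCommGroup M]
    [Module R M] {m : M} (hm : m ≠ 0) (h : ∀ s ∈ R ∙ m, s ≠ 0 → m ∈ R ∙ s) :
    IsSimpleModule R (R ∙ m) := by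
  refine isSimpleModule_iff_isAtom.mpr ⟨by simpa using hm, fun N hN => ?_⟩
  by_contra hN0
  obtain ⟨s, hsN, hs0⟩ := N.ne_bot_iff.mp hN0
  have hmN : m ∈ N := (Submodule.span_singleton_le_iff_mem s N).mpr hsN (h s (hN.le hsN) hs0)
  exact hN.not_ge ((Submodule.span_singleton_le_iff_mem m N).mpr hmN)

section LeftInverse

variable {R : Type*} [Ring R] {x y : R}

theorem mul_one_sub_mul_eq_zero (h : x * y = 1) : x * (1 - y * x) = 0 := by
  rw [mul_sub, mul_one, ← mul_assoc, h, one_mul, sub_self]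

theorem one_sub_mul_mul_eq_zero (h : x * y = 1) : (1 - y * x) * y = 0 := by
  rw [sub_mul, one_mul, mul_assoc, h, mul_one, sub_self]

theorem isIdempotentElem_one_sub_mul (h : x * y = 1) : IsIdempotentElem (1 - y * x) := by
  rw [IsIdempotentElem, sub_mul, one_mul, mul_assoc, mul_one_sub_mul_eq_zero h, mul_zero,
    sub_zero]

theorem pow_mul_pow_of_mul_eq_one (h : x * y = 1) (k m : ℕ) :
    x ^ k * y ^ m = y ^ (m - k) * x ^ (k - m) := by
  induction k generalizing m with
  | zero => simp
  | succ k ih =>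
    cases m with
    | zero => simp
    | succ m =>
      rw [pow_succ, pow_succ', mul_assoc, ← mul_assoc x, h, one_mul, ih,
        Nat.add_sub_add_right, Nat.add_sub_add_right]

theorem one_sub_mul_mul_pow_eq_zero (h : x * y = 1) {n : ℕ} (hn : n ≠ 0) :
    (1 - y * x) * y ^ n = 0 := by
  obtain ⟨n, rfl⟩ := Nat.exists_eq_add_one_of_ne_zero hn
  rw [pow_succ', ← mul_assoc, one_sub_mul_mul_eq_zero h, zero_mul]

theorem pow_mul_one_sub_mul_eq_zero (h : x * y = 1) {n : ℕ} (hn : n ≠ 0) :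
    x ^ n * (1 - y * x) = 0 := by
  obtain ⟨n, rfl⟩ := Nat.exists_eq_add_one_of_ne_zero hn
  rw [pow_succ, mul_assoc, mul_one_sub_mul_eq_zero h, mul_zero]

theorem one_sub_mul_mul_pow_mul_pow_mul (h : x * y = 1) (k m : ℕ) :
    (1 - y * x) * x ^ k * (y ^ m * (1 - y * x)) = if k = m then 1 - y * x else 0 := by
  have hsplit : (1 - y * x) * x ^ k * (y ^ m * (1 - y * x)) =
      (1 - y * x) * y ^ (m - k) * (x ^ (k - m) * (1 - y * x)) := by
    rw [mul_assoc, ← mul_assoc (x ^ k), pow_mul_pow_of_mul_eq_one h]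
    simp only [mul_assoc]
  rw [hsplit]
  split_ifs with hkm
  · simp only [hkm, Nat.sub_self, pow_zero, mul_one, one_mul]
    exact isIdempotentElem_one_sub_mul h
  · rcases Nat.lt_or_gt_of_ne hkm with hlt | hgt
    · rw [one_sub_mul_mul_pow_eq_zero h (Nat.sub_ne_zero_of_lt hlt), zero_mul]
    · rw [pow_mul_one_sub_mul_eq_zero h (Nat.sub_ne_zero_of_lt hgt), mul_zero]

variable {K} [Algebra K R]

theorem mul_mem_span_pow_mul_one_sub_mul (h : x * y = 1) {r : R}
    (hr : r ∈ Algebra.adjoin K {x, y}) {s : R}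
    (hs : s ∈ Submodule.span K (Set.range fun m : ℕ => y ^ m * (1 - y * x))) :
    r * s ∈ Submodule.span K (Set.range fun m : ℕ => y ^ m * (1 - y * x)) := by
  set W := Submodule.span K (Set.range fun m : ℕ => y ^ m * (1 - y * x))
  have invariant : ∀ z : R, (∀ m : ℕ, z * (y ^ m * (1 - y * x)) ∈ W) → ∀ s ∈ W, z * s ∈ W :=
    fun z hz => Submodule.span_le (p := W.comap (LinearMap.mulLeft K z)).mpr
      (Set.range_subset_iff.mpr hz)
  induction hr using Algebra.adjoin_induction generalizing s with
  | mem z hz =>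
    rcases hz with rfl | rfl
    · refine invariant _ (fun m => ?_) s hs
      cases m with
      | zero => simp [mul_one_sub_mul_eq_zero h]
      | succ m =>
        rw [pow_succ', mul_assoc, ← mul_assoc z, h, one_mul]
        exact Submodule.subset_span ⟨m, rfl⟩
    · refine invariant _ (fun m => ?_) s hs
      rw [← mul_assoc, ← pow_succ']
      exact Submodule.subset_span ⟨m + 1, rfl⟩
  | algebraMap c => rw [← Algebra.smul_def]; exact W.smul_mem c hs
  | add a b _ _ iha ihb => rw [add_mul]; exact W.add_mem (iha hs) (ihb hs)
  | mul a b _ _ iha ihb => rw [mul_assoc]; exact iha (ihb hs)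

theorem one_sub_mul_mem_span_singleton (h : x * y = 1) (hgen : Algebra.adjoin K {x, y} = ⊤)
    {s : R} (hs : s ∈ R ∙ (1 - y * x)) (hs0 : s ≠ 0) : 1 - y * x ∈ R ∙ s := by
  obtain ⟨r, rfl⟩ := Submodule.mem_span_singleton.mp hs
  have hr : r * (1 - y * x) ∈ Submodule.span K (Set.range fun m : ℕ => y ^ m * (1 - y * x)) :=
    mul_mem_span_pow_mul_one_sub_mul (K := K) h (hgen ▸ Algebra.mem_top)
      (Submodule.subset_span ⟨0, by simp⟩)
  obtain ⟨c, hc⟩ := Finsupp.mem_span_range_iff_exists_finsupp.mp hr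
  obtain ⟨k, hk⟩ : ∃ k, c k ≠ 0 := by
    by_contra! hc0
    rw [show c = 0 from Finsupp.ext hc0, Finsupp.sum_zero_index] at hc
    exact hs0 hc.symm
  have hproj : (1 - y * x) * x ^ k * (r * (1 - y * x)) = c k • (1 - y * x) := by
    simp_rw [← hc, Finsupp.mul_sum, mul_smul_comm, one_sub_mul_mul_pow_mul_pow_mul h,
      smul_ite, smul_zero]
    rw [Finsupp.sum_ite_eq, if_pos (Finsupp.mem_support_iff.mpr hk)]
  refine Submodule.mem_span_singleton.mpr ⟨(c k)⁻¹ • ((1 - y * x) * x ^ k), ?_⟩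
  rw [smul_eq_mul, smul_eq_mul, smul_mul_assoc, hproj, smul_smul, inv_mul_cancel₀ hk, one_smul]

theorem isSimpleModule_span_one_sub_mul (h : x * y = 1) (hyx : y * x ≠ 1)
    (hgen : Algebra.adjoin K {x, y} = ⊤) : IsSimpleModule R (R ∙ (1 - y * x)) :=
  isSimpleModule_span_singleton_of_mem_span (sub_ne_zero.mpr hyx.symm)
    fun _ hs hs0 => one_sub_mul_mem_span_singleton h hgen hs hs0

end LeftInverse

theorem tx_mul_ty : tx K * ty K = 1 := by
  rw [tx, ty, ← map_mul, RingQuot.mkAlgHom_rel K ToeplitzRel.rel, map_one]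

theorem adjoin_tx_ty : Algebra.adjoin K {tx K, ty K} = ⊤ := by
  refine Algebra.eq_top_iff.mpr fun r => ?_
  obtain ⟨a, rfl⟩ := RingQuot.mkAlgHom_surjective K (ToeplitzRel K) r
  induction a using FreeAlgebra.induction with
  | grade0 c => rw [AlgHom.commutes]; exact Subalgebra.algebraMap_mem _ c
  | grade1 i =>
    fin_cases i
    exacts [Algebra.subset_adjoin (Set.mem_insert _ _),
      Algebra.subset_adjoin (Set.mem_insert_of_mem _ rfl)]
  | add a b ha hb => rw [map_add]; exact add_mem ha hb
  | mul a b ha hb => rw [map_mul]; exact mul_mem ha hb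

def shiftRep : Toeplitz K →ₐ[K] Module.End K (ℕ → K) :=
  RingQuot.liftAlgHom K ⟨FreeAlgebra.lift K ![LinearMap.funLeft K K Nat.succ,
    LinearMap.funLeft K K Nat.pred], by
      rintro _ _ ⟨⟩
      rw [map_mul, FreeAlgebra.lift_ι_apply, FreeAlgebra.lift_ι_apply, map_one]
      exact LinearMap.ext fun _ => rfl⟩

theorem ty_mul_tx_ne_one : ty K * tx K ≠ 1 := by
  intro hyx
  -- `y * x` acts by `g ↦ g ∘ succ ∘ pred`, which moves the value `1` of `n ↦ n` at `1` to `0`.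
  have h := congrArg (fun r => shiftRep K r (fun n => (n : K)) 0) hyx
  simp [shiftRep, tx, ty] at h

/-- `S₁ = R(1 - yx)` is a simple left `R`-module. -/
theorem toeplitz_S1_simple :
    IsSimpleModule (Toeplitz K) (Submodule.span (Toeplitz K) {1 - ty K * tx K}) :=
  isSimpleModule_span_one_sub_mul (tx_mul_ty K) (ty_mul_tx_ne_one K) (adjoin_tx_ty K)
end
end
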